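/- Let A be a (j+3, j+d)-configuration, i.e., a set of j+d pairwise edge-disjoint 4-cycles whose union contains exactly j+3 vertices, where j and d are positive integers. Then A contains a 4-cycle C such that each vertex of C is also contained in some other 4-cycle of A (so that discarding C yields a (j+3, j+d-1)-configuration). -/

import Mathlib

open Finset

/-- The edge set of the 4-cycle `(a, b, c, d)`: edges {a,b}, {b,c}, {c,d}, {d,a}. -/
def cycEdges {V : Type*} [DecidableEq V] (a b c d : V) : Finset (Sym2 V) :=
  {s(a, b), s(b, c), s(c, d), s(d, a)}

/-- `E` is the edge set of a 4-cycle on four distinct vertices. -/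
def IsFourCycle {V : Type*} [DecidableEq V] (E : Finset (Sym2 V)) : Prop :=
  ∃ a b c d : V, ([a, b, c, d] : List V).Nodup ∧ E = cycEdges a b c d

/-- The set of vertices covered by a set of edges. -/
def edgeVerts {V : Type*} [DecidableEq V] (E : Finset (Sym2 V)) : Finset V :=
  E.sup (Sym2.lift ⟨fun x y => ({x, y} : Finset V), fun x y => Finset.pair_comm x y⟩)

/-- A `(k, l)`-configuration: a set of `l` pairwise edge-disjoint 4-cycles whose
union contains exactly `k` vertices. -/
def IsConfiguration {V : Type*} [DecidableEq V] (k l : ℕ)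
    (D : Finset (Finset (Sym2 V))) : Prop :=
  D.card = l ∧ (∀ E ∈ D, IsFourCycle E) ∧
    (∀ E ∈ D, ∀ F ∈ D, E ≠ F → Disjoint E F) ∧
    (D.sup edgeVerts).card = k

/-- `C` is a 4-cycle system: a collection of 4-cycles whose edge sets partition
the edge set of the complete graph on `V`. -/
def IsFourCycleSystem {V : Type*} [DecidableEq V] (C : Finset (Finset (Sym2 V))) : Prop :=
  (∀ E ∈ C, IsFourCycle E) ∧ ∀ e : Sym2 V, ¬ e.IsDiag → ∃! E, E ∈ C ∧ e ∈ E

/-- `C` is a 4-cycle packing: a set of pairwise edge-disjoint 4-cycles. -/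
def IsFourCyclePacking {V : Type*} [DecidableEq V] (C : Finset (Finset (Sym2 V))) : Prop :=
  (∀ E ∈ C, IsFourCycle E) ∧ ∀ E ∈ C, ∀ F ∈ C, E ≠ F → Disjoint E F

/-- `C` is `r`-sparse: it contains no `(j+3, j)`-configuration for `2 ≤ j ≤ r`. -/
def RSparse {V : Type*} [DecidableEq V] (r : ℕ) (C : Finset (Finset (Sym2 V))) : Prop :=
  ∀ j, 2 ≤ j → j ≤ r → ∀ D ⊆ C, ¬ IsConfiguration (j + 3) j D

/-- Two 4-cycles form a double-diamond: they are `(a,b,c,d)` and `(a,e,c,f)`,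
sharing the diagonal {a,c}. -/
def IsDoubleDiamond {V : Type*} [DecidableEq V] (E F : Finset (Sym2 V)) : Prop :=
  ∃ a b c d e f : V, ([a, b, c, d, e, f] : List V).Nodup ∧
    E = cycEdges a b c d ∧ F = cycEdges a e c f

/-- `C` is D-avoiding: no two of its 4-cycles form a double-diamond. -/
def DAvoiding {V : Type*} [DecidableEq V] (C : Finset (Finset (Sym2 V))) : Prop :=
  ∀ E ∈ C, ∀ F ∈ C, ¬ IsDoubleDiamond E F

/-- `C` is strictly `r`-sparse: `r`-sparse and D-avoiding. -/
def StrictlyRSparse {V : Type*} [DecidableEq V] (r : ℕ)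
    (C : Finset (Finset (Sym2 V))) : Prop :=
  RSparse r C ∧ DAvoiding C

section

variable {V : Type*} [DecidableEq V]

lemma mem_edgeVerts {E : Finset (Sym2 V)} {x : V} : x ∈ edgeVerts E ↔ ∃ e ∈ E, x ∈ e := by
  simp only [edgeVerts, mem_sup]
  refine exists_congr fun e => and_congr_right fun _ => ?_
  induction e using Sym2.ind with
  | _ y z => simp [Sym2.mem_iff]

lemma edgeVerts_cycEdges (a b c d : V) : edgeVerts (cycEdges a b c d) = {a, b, c, d} := by
  ext v
  simp only [mem_edgeVerts, cycEdges, mem_insert, mem_singleton, exists_eq_or_imp,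
    exists_eq_left, Sym2.mem_iff]
  tauto

lemma cycEdges_rotate (a b c d : V) : cycEdges a b c d = cycEdges b c d a := by
  ext e
  simp only [cycEdges, mem_insert, mem_singleton]
  tauto

lemma two_le_card_filter_mem_cycEdges {a b c d : V} (hbd : b ≠ d) :
    2 ≤ #{e ∈ cycEdges a b c d | a ∈ e} := by
  have hsub : {s(a, b), s(d, a)} ⊆ {e ∈ cycEdges a b c d | a ∈ e} := by
    intro e he
    simp only [mem_insert, mem_singleton] at he
    rcases he with rfl | rfl <;> simp [cycEdges]
  have hne : s(a, b) ≠ s(d, a) := by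
    simp only [ne_eq, Sym2.eq_iff]
    rintro (⟨rfl, rfl⟩ | ⟨-, rfl⟩) <;> exact hbd rfl
  exact (card_pair hne).symm.le.trans (card_le_card hsub)

namespace IsFourCycle

variable {E : Finset (Sym2 V)}

lemma card_edgeVerts (hE : IsFourCycle E) : #(edgeVerts E) = 4 := by
  obtain ⟨a, b, c, d, hnd, rfl⟩ := hE
  rw [edgeVerts_cycEdges]
  convert List.toFinset_card_of_nodup hnd using 2 <;> simp

lemma not_isDiag (hE : IsFourCycle E) {e : Sym2 V} (he : e ∈ E) : ¬ e.IsDiag := by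
  obtain ⟨a, b, c, d, hnd, rfl⟩ := hE
  simp only [List.nodup_cons, List.mem_cons, not_or, List.nodup_nil, and_true] at hnd
  simp only [cycEdges, mem_insert, mem_singleton] at he
  rcases he with rfl | rfl | rfl | rfl <;> simp only [Sym2.mk_isDiag_iff] <;> tauto

lemma two_le_card_filter_mem (hE : IsFourCycle E) {v : V} (hv : v ∈ edgeVerts E) :
    2 ≤ #{e ∈ E | v ∈ e} := by
  obtain ⟨a, b, c, d, hnd, rfl⟩ := hE
  simp only [List.nodup_cons, List.mem_cons, not_or, List.nodup_nil, and_true] at hnd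
  rw [edgeVerts_cycEdges] at hv
  simp only [mem_insert, mem_singleton] at hv
  rcases hv with rfl | rfl | rfl | rfl
  · exact two_le_card_filter_mem_cycEdges (by tauto)
  · rw [cycEdges_rotate]
    exact two_le_card_filter_mem_cycEdges (by tauto)
  · rw [cycEdges_rotate, cycEdges_rotate]
    exact two_le_card_filter_mem_cycEdges (by tauto)
  · rw [cycEdges_rotate, cycEdges_rotate, cycEdges_rotate]
    exact two_le_card_filter_mem_cycEdges (by tauto)

end IsFourCycle

def cyclesThrough (D : Finset (Finset (Sym2 V))) (v : V) : Finset (Finset (Sym2 V)) :=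
  {E ∈ D | v ∈ edgeVerts E}

lemma sum_card_cyclesThrough (D : Finset (Finset (Sym2 V))) :
    ∑ v ∈ D.sup edgeVerts, #(cyclesThrough D v) = ∑ E ∈ D, #(edgeVerts E) := by
  refine (sum_card_bipartiteAbove_eq_sum_card_bipartiteBelow
    (fun E v => v ∈ edgeVerts E)).symm.trans (sum_congr rfl fun E hE => ?_)
  rw [bipartiteAbove, filter_mem_eq_inter, inter_eq_right.mpr (le_sup hE)]

lemma Finset.sup_erase_eq {α β : Type*} [DecidableEq α] [DecidableEq β] {s : Finset α}
    {f : α → Finset β} {a : α} (h : ∀ x ∈ f a, ∃ b ∈ s, b ≠ a ∧ x ∈ f b) :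
    (s.erase a).sup f = s.sup f := by
  refine (sup_mono (erase_subset _ _)).antisymm fun x hx => ?_
  obtain ⟨b, hb, hxb⟩ := mem_sup.mp hx
  by_cases hba : b = a
  · obtain ⟨c, hc, hca, hxc⟩ := h x (hba ▸ hxb)
    exact mem_sup.mpr ⟨c, mem_erase.mpr ⟨hca, hc⟩, hxc⟩
  · exact mem_sup.mpr ⟨b, mem_erase.mpr ⟨hba, hb⟩, hxb⟩

namespace IsFourCyclePacking

variable {D : Finset (Finset (Sym2 V))}

lemma erase (hD : IsFourCyclePacking D) (C : Finset (Sym2 V)) :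
    IsFourCyclePacking (D.erase C) :=
  ⟨fun E hE => hD.1 E (mem_of_mem_erase hE),
    fun E hE F hF => hD.2 E (mem_of_mem_erase hE) F (mem_of_mem_erase hF)⟩

/-- Each cycle through `v` contributes at least two edges at `v`, edges of distinct cycles are
distinct, and an edge at `v` is determined by its other endpoint. -/
lemma two_mul_card_cyclesThrough_le (hD : IsFourCyclePacking D) {v : V}
    (hv : v ∈ D.sup edgeVerts) : 2 * #(cyclesThrough D v) ≤ #(D.sup edgeVerts) - 1 := by
  set T := D.biUnion fun E => {e ∈ E | v ∈ e}
  have hT_card : #T = ∑ E ∈ D, #{e ∈ E | v ∈ e} :=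
    card_biUnion fun E hE F hF hEF =>
      (hD.2 E hE F hF hEF).mono (filter_subset _ _) (filter_subset _ _)
  have hT_lower : 2 * #(cyclesThrough D v) ≤ #T := by
    rw [hT_card]
    calc 2 * #(cyclesThrough D v) = ∑ _E ∈ cyclesThrough D v, 2 := by
          rw [sum_const, smul_eq_mul, mul_comm]
      _ ≤ ∑ E ∈ cyclesThrough D v, #{e ∈ E | v ∈ e} :=
          sum_le_sum fun E hE => (hD.1 E (mem_filter.mp hE).1).two_le_card_filter_mem
            (mem_filter.mp hE).2
      _ ≤ ∑ E ∈ D, #{e ∈ E | v ∈ e} := sum_le_sum_of_subset (filter_subset _ _)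
  have hT_sub : T ⊆ ((D.sup edgeVerts).erase v).image fun u => s(v, u) := by
    intro e he
    obtain ⟨E, hE, heE, hve⟩ := by simpa only [T, mem_biUnion, mem_filter] using he
    refine mem_image.mpr ⟨Sym2.Mem.other hve, mem_erase.mpr ⟨?_, ?_⟩, Sym2.other_spec hve⟩
    · exact Sym2.other_ne ((hD.1 E hE).not_isDiag heE) hve
    · exact mem_sup.mpr ⟨E, hE, mem_edgeVerts.mpr ⟨e, heE, Sym2.other_mem hve⟩⟩
  calc 2 * #(cyclesThrough D v) ≤ #T := hT_lower
    _ ≤ #((D.sup edgeVerts).erase v) := (card_le_card hT_sub).trans card_image_le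
    _ = #(D.sup edgeVerts) - 1 := card_erase_of_mem hv

/-- If every cycle had a private vertex, these would be `#D` vertices lying on one cycle each,
and the at most two remaining vertices lie on at most `(n - 1) / 2` cycles each (`n` the number
of vertices): too few to account for the `4 * #D` vertex-cycle incidences. -/
theorem exists_forall_mem_edgeVerts_shared (hD : IsFourCyclePacking D) (hne : D.Nonempty)
    (hW : #(D.sup edgeVerts) ≤ #D + 2) :
    ∃ C ∈ D, ∀ x ∈ edgeVerts C, ∃ C' ∈ D, C' ≠ C ∧ x ∈ edgeVerts C' := by
  by_contra! hno
  have : Nonempty V := by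
    obtain ⟨C, hC⟩ := hne
    exact ⟨(hno C hC).choose⟩
  choose! g hg_mem hg_priv using hno
  set W := D.sup edgeVerts
  have hg_inj : Set.InjOn g D := fun C hC C' hC' heq => by
    by_contra hCC'
    exact hg_priv C hC C' hC' (Ne.symm hCC') (heq ▸ hg_mem C' hC')
  set P := D.image g
  have hP_card : #P = #D := card_image_of_injOn hg_inj
  have hPW : P ⊆ W := by
    intro v hv
    obtain ⟨C, hC, rfl⟩ := mem_image.mp hv
    exact mem_sup.mpr ⟨C, hC, hg_mem C hC⟩
  have hP_deg : ∀ v ∈ P, #(cyclesThrough D v) = 1 := by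
    intro v hv
    obtain ⟨C, hC, rfl⟩ := mem_image.mp hv
    refine card_eq_one.mpr ⟨C, eq_singleton_iff_unique_mem.mpr ⟨?_, fun F hF => ?_⟩⟩
    · exact mem_filter.mpr ⟨hC, hg_mem C hC⟩
    · obtain ⟨hF, hgF⟩ := mem_filter.mp hF
      by_contra hFC
      exact hg_priv C hC F hF hFC hgF
  have h_total : ∑ v ∈ W, #(cyclesThrough D v) = 4 * #D := by
    rw [sum_card_cyclesThrough, sum_congr rfl fun E hE => (hD.1 E hE).card_edgeVerts,
      sum_const, smul_eq_mul, mul_comm]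
  have h_private : ∑ v ∈ P, #(cyclesThrough D v) = #D := by
    rw [sum_congr rfl hP_deg, sum_const, smul_eq_mul, mul_one, hP_card]
  have h_rest : 2 * ∑ v ∈ W \ P, #(cyclesThrough D v) ≤ 2 * (#W - 1) := by
    have h_rest_card : #(W \ P) ≤ 2 := by
      rw [card_sdiff_of_subset hPW, hP_card]
      omega
    calc 2 * ∑ v ∈ W \ P, #(cyclesThrough D v)
        = ∑ v ∈ W \ P, 2 * #(cyclesThrough D v) := mul_sum _ _ _
      _ ≤ ∑ _v ∈ W \ P, (#W - 1) :=
          sum_le_sum fun v hv => hD.two_mul_card_cyclesThrough_le (mem_sdiff.mp hv).1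
      _ = #(W \ P) * (#W - 1) := by rw [sum_const, smul_eq_mul]
      _ ≤ 2 * (#W - 1) := Nat.mul_le_mul_right _ h_rest_card
  have h_split := sum_sdiff (f := fun v => #(cyclesThrough D v)) hPW
  have := hne.card_pos
  omega

end IsFourCyclePacking

end

theorem exists_discardable_cycle_general {V : Type*} [DecidableEq V] (j d : ℕ)
    (hd : 0 < d) (A : Finset (Finset (Sym2 V)))
    (hA : IsConfiguration (j + 3) (j + d) A) :
    ∃ C ∈ A, (∀ x ∈ edgeVerts C, ∃ C' ∈ A, C' ≠ C ∧ x ∈ edgeVerts C') ∧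
      IsConfiguration (j + 3) (j + d - 1) (A.erase C) := by
  obtain ⟨hcard, hcyc, hdisj, hverts⟩ := hA
  have hpack : IsFourCyclePacking A := ⟨hcyc, hdisj⟩
  obtain ⟨C, hC, hshared⟩ := hpack.exists_forall_mem_edgeVerts_shared
    (card_pos.mp (by omega)) (by omega)
  have hpack' := hpack.erase C
  refine ⟨C, hC, hshared, ?_, hpack'.1, hpack'.2, ?_⟩
  · rw [card_erase_of_mem hC, hcard]
  · rw [Finset.sup_erase_eq hshared, hverts]

/-- Any `(j+3, j+d)`-configuration `A` contains a 4-cycle `C` each of whose vertices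
lies in another 4-cycle of `A`, so that discarding `C` yields a
`(j+3, j+d-1)`-configuration. -/
theorem exists_discardable_cycle {V : Type*} [DecidableEq V] (j d : ℕ)
    (hj : 0 < j) (hd : 0 < d) (A : Finset (Finset (Sym2 V)))
    (hA : IsConfiguration (j + 3) (j + d) A) :
    ∃ C ∈ A, (∀ x ∈ edgeVerts C, ∃ C' ∈ A, C' ≠ C ∧ x ∈ edgeVerts C') ∧
      IsConfiguration (j + 3) (j + d - 1) (A.erase C) :=
  exists_discardable_cycle_general j d hd A hA
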